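/- Consider an uncertain optimization problem with decision space ℝ^n, scenario space ℝ^M, a convex set X ⊆ ℝ^n, constraints of the form F(x, ξ) = G(x) − b(ξ) where G : ℝ^n → ℝ^m has convex component functions and b : ℝ^M → ℝ^m has concave component functions, an objective f : ℝ^n × ℝ^M → ℝ that is jointly quasiconvex in (y, ξ), and a metric d on ℝ^n such that for every x the function y ↦ d(x, y) is quasiconvex. Let U' = {ξ¹, …, ξ^N} ⊆ ℝ^M be finite and U = conv(U') its convex hull. Then a point x ∈ X is recoverable-robust with respect to U if and only if it is recoverable-robust with respect to U'. -/

import Mathlib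

/-! Feasible pairs `(y, ξ)` form a convex set, and both `f` and `(y, ξ) ↦ d x y` are quasiconvex
in `(y, ξ)`. So a recovery `y'` on the scenarios `U'` extends to `conv U'`: for `ξ = ∑ λᵢ ξⁱ` take
`y ξ = ∑ λᵢ y'(ξⁱ)`, which is feasible for `ξ` by convexity and whose objective value and recovery
cost are bounded by the worst ones at the `ξⁱ` by quasiconvexity. Restricting a recovery from `U`
to `U'` can only lower both objectives, so Pareto efficiency transfers in both directions. -/

section

variable {n mM m : ℕ}

/-- `(x, y)` is feasible for `Rec(U)` with right-hand-side constraints `G(·) − b(ξ) ≤ 0`. -/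
def RecFeasible (X : Set (Fin n → ℝ)) (G : (Fin n → ℝ) → Fin m → ℝ) (b : (Fin mM → ℝ) → Fin m → ℝ)
    (U : Set (Fin mM → ℝ)) (x : Fin n → ℝ) (y : (Fin mM → ℝ) → (Fin n → ℝ)) : Prop :=
  x ∈ X ∧ ∀ ξ ∈ U, y ξ ∈ X ∧ ∀ i, G (y ξ) i - b ξ i ≤ 0

/-- Worst-case objective value, in the extended reals. -/
noncomputable def fObj (f : (Fin n → ℝ) → (Fin mM → ℝ) → ℝ) (U : Set (Fin mM → ℝ))
    (y : (Fin mM → ℝ) → (Fin n → ℝ)) : EReal :=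
  ⨆ ξ ∈ U, (f (y ξ) ξ : EReal)

/-- Worst-case recovery cost w.r.t. the metric `d`, in the extended reals. -/
noncomputable def rObj (d : (Fin n → ℝ) → (Fin n → ℝ) → ℝ) (U : Set (Fin mM → ℝ))
    (x : Fin n → ℝ) (y : (Fin mM → ℝ) → (Fin n → ℝ)) : EReal :=
  ⨆ ξ ∈ U, (d x (y ξ) : EReal)

/-- Pareto efficiency for `Rec(U)`. -/
def ParetoEfficient (X : Set (Fin n → ℝ)) (f : (Fin n → ℝ) → (Fin mM → ℝ) → ℝ)
    (G : (Fin n → ℝ) → Fin m → ℝ) (b : (Fin mM → ℝ) → Fin m → ℝ)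
    (d : (Fin n → ℝ) → (Fin n → ℝ) → ℝ)
    (U : Set (Fin mM → ℝ)) (x : Fin n → ℝ) (y : (Fin mM → ℝ) → (Fin n → ℝ)) : Prop :=
  RecFeasible X G b U x y ∧
    ¬ ∃ x' y', RecFeasible X G b U x' y' ∧
      fObj f U y' ≤ fObj f U y ∧ rObj d U x' y' ≤ rObj d U x y ∧
      (fObj f U y' < fObj f U y ∨ rObj d U x' y' < rObj d U x y)

/-- `x` is recoverable-robust with respect to `U`. -/
def RecoverableRobust (X : Set (Fin n → ℝ)) (f : (Fin n → ℝ) → (Fin mM → ℝ) → ℝ)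
    (G : (Fin n → ℝ) → Fin m → ℝ) (b : (Fin mM → ℝ) → Fin m → ℝ)
    (d : (Fin n → ℝ) → (Fin n → ℝ) → ℝ)
    (U : Set (Fin mM → ℝ)) (x : Fin n → ℝ) : Prop :=
  ∃ y, ParetoEfficient X f G b d U x y

section Quasiconvex

variable {𝕜 E F β : Type*} [Ring 𝕜] [PartialOrder 𝕜]
  [AddCommGroup E] [Module 𝕜 E] [AddCommGroup F] [Module 𝕜 F] [LinearOrder β]

theorem QuasiconvexOn.comp_linearMap {s : Set F} {φ : F → β} (hφ : QuasiconvexOn 𝕜 s φ)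
    (g : E →ₗ[𝕜] F) : QuasiconvexOn 𝕜 (g ⁻¹' s) (φ ∘ g) :=
  fun r => (hφ r).linear_preimage g

theorem QuasiconvexOn.exists_ge_of_mem_convexHull {s t : Set E} {φ : E → β} {x : E}
    (hφ : QuasiconvexOn 𝕜 s φ) (hts : t ⊆ s) (hx : x ∈ convexHull 𝕜 t) :
    ∃ y ∈ t, φ x ≤ φ y := by
  by_contra! h
  have hsub : t ⊆ {y ∈ s | φ y < φ x} := fun y hy => ⟨hts hy, h y hy⟩
  exact lt_irrefl _ (convexHull_min hsub (hφ.convex_lt (φ x)) hx).2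

theorem exists_forall_mem_convexHull_image_prod (y' : F → E) (S : Set F) :
    ∃ y : F → E, ∀ ζ ∈ convexHull 𝕜 S, (y ζ, ζ) ∈ convexHull 𝕜 ((fun ζ => (y' ζ, ζ)) '' S) := by
  have hS : LinearMap.snd 𝕜 E F '' ((fun ζ => (y' ζ, ζ)) '' S) = S := by
    rw [Set.image_image]; exact Set.image_id' S
  have hpoint : ∀ ζ, ∃ v, ζ ∈ convexHull 𝕜 S →
      (v, ζ) ∈ convexHull 𝕜 ((fun ζ => (y' ζ, ζ)) '' S) := fun ζ => by
    by_cases hζ : ζ ∈ convexHull 𝕜 S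
    · rw [← hS, ← LinearMap.image_convexHull] at hζ
      obtain ⟨⟨v, _⟩, hv, rfl⟩ := hζ
      exact ⟨v, fun _ => hv⟩
    · exact ⟨0, fun h => absurd h hζ⟩
  choose y hy using hpoint
  exact ⟨y, hy⟩

theorem biSup_convexHull_le_of_quasiconvexOn {φ : E × F → ℝ} (hφ : QuasiconvexOn 𝕜 Set.univ φ)
    {S : Set F} {y y' : F → E}
    (hy : ∀ ζ ∈ convexHull 𝕜 S, (y ζ, ζ) ∈ convexHull 𝕜 ((fun ζ => (y' ζ, ζ)) '' S)) :
    ⨆ ζ ∈ convexHull 𝕜 S, (φ (y ζ, ζ) : EReal) ≤ ⨆ ζ ∈ S, (φ (y' ζ, ζ) : EReal) := by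
  refine iSup₂_le fun ζ hζ => ?_
  obtain ⟨_, ⟨ζ', hζ', rfl⟩, hle⟩ := hφ.exists_ge_of_mem_convexHull (Set.subset_univ _) (hy ζ hζ)
  exact (EReal.coe_le_coe_iff.2 hle).trans
    (le_iSup₂ (f := fun ζ _ => (φ (y' ζ, ζ) : EReal)) ζ' hζ')

end Quasiconvex

def ScenarioFeasible {E F ι : Type*} (X : Set E) (G : E → ι → ℝ) (b : F → ι → ℝ) (y : E)
    (ξ : F) : Prop :=
  y ∈ X ∧ ∀ i, G y i - b ξ i ≤ 0

theorem convex_setOf_scenarioFeasible {E F ι : Type*} [AddCommGroup E] [Module ℝ E]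
    [AddCommGroup F] [Module ℝ F] {X : Set E} {G : E → ι → ℝ} {b : F → ι → ℝ}
    (hX : Convex ℝ X) (hG : ∀ i, ConvexOn ℝ Set.univ fun y => G y i)
    (hb : ∀ i, ConcaveOn ℝ Set.univ fun ξ => b ξ i) :
    Convex ℝ {p : E × F | ScenarioFeasible X G b p.1 p.2} := by
  have hconstr : ∀ i, Convex ℝ {p : E × F | G p.1 i - b p.2 i ≤ 0} := fun i => by
    simpa using (((hG i).comp_linearMap (LinearMap.fst ℝ E F)).sub
      ((hb i).comp_linearMap (LinearMap.snd ℝ E F))).convex_le 0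
  convert (hX.prod convex_univ).inter (convex_iInter hconstr) using 1
  ext
  simp [ScenarioFeasible]

section RecoverableRobust

variable {X : Set (Fin n → ℝ)} {G : (Fin n → ℝ) → Fin m → ℝ} {b : (Fin mM → ℝ) → Fin m → ℝ}
  {f : (Fin n → ℝ) → (Fin mM → ℝ) → ℝ} {d : (Fin n → ℝ) → (Fin n → ℝ) → ℝ}
  {U U' : Set (Fin mM → ℝ)} {x : Fin n → ℝ} {y : (Fin mM → ℝ) → (Fin n → ℝ)}

-- Pareto dominance in `Rec(U)` is `<` for the componentwise order on `EReal × EReal`.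
noncomputable def recObjectives (f : (Fin n → ℝ) → (Fin mM → ℝ) → ℝ)
    (d : (Fin n → ℝ) → (Fin n → ℝ) → ℝ) (U : Set (Fin mM → ℝ)) (x : Fin n → ℝ)
    (y : (Fin mM → ℝ) → (Fin n → ℝ)) : EReal × EReal :=
  (fObj f U y, rObj d U x y)

theorem paretoEfficient_iff :
    ParetoEfficient X f G b d U x y ↔ RecFeasible X G b U x y ∧
      ∀ x' y', RecFeasible X G b U x' y' →
        ¬ recObjectives f d U x' y' < recObjectives f d U x y := by
  simp only [ParetoEfficient, recObjectives, Prod.lt_iff, not_exists]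
  refine and_congr_right fun _ => forall₂_congr fun x' y' => ?_
  constructor
  · rintro h hfeas (⟨hf, hr⟩ | ⟨hf, hr⟩)
    exacts [h ⟨hfeas, hf.le, hr, .inl hf⟩, h ⟨hfeas, hf, hr.le, .inr hr⟩]
  · rintro h ⟨hfeas, hf, hr, hf' | hr'⟩
    exacts [h hfeas (.inl ⟨hf', hr⟩), h hfeas (.inr ⟨hf, hr'⟩)]

theorem RecFeasible.mono (h : RecFeasible X G b U x y) (hU : U' ⊆ U) :
    RecFeasible X G b U' x y :=
  ⟨h.1, fun ζ hζ => h.2 ζ (hU hζ)⟩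

theorem recObjectives_mono (hU : U' ⊆ U) :
    recObjectives f d U' x y ≤ recObjectives f d U x y :=
  ⟨biSup_mono fun _ hζ => hU hζ, biSup_mono fun _ hζ => hU hζ⟩

theorem recoverableRobust_iff_of_subset (hU : U' ⊆ U)
    (hext : ∀ x y', RecFeasible X G b U' x y' →
      ∃ y, RecFeasible X G b U x y ∧ recObjectives f d U x y ≤ recObjectives f d U' x y')
    (x : Fin n → ℝ) :
    RecoverableRobust X f G b d U x ↔ RecoverableRobust X f G b d U' x := by
  simp only [RecoverableRobust, paretoEfficient_iff]
  constructor
  · rintro ⟨y, hy, hmin⟩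
    refine ⟨y, hy.mono hU, fun x' y' hy' hlt => ?_⟩
    obtain ⟨y'', hy'', hle⟩ := hext x' y' hy'
    exact hmin x' y'' hy'' (hle.trans_lt (hlt.trans_le (recObjectives_mono hU)))
  · rintro ⟨y', hy', hmin⟩
    obtain ⟨y, hy, hle⟩ := hext x y' hy'
    refine ⟨y, hy, fun x' y'' hy'' hlt => ?_⟩
    exact hmin x' y'' (hy''.mono hU) ((recObjectives_mono hU).trans_lt (hlt.trans_le hle))

theorem RecFeasible.exists_convexHull (hX : Convex ℝ X)
    (hG : ∀ i, ConvexOn ℝ Set.univ (fun x => G x i))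
    (hb : ∀ i, ConcaveOn ℝ Set.univ (fun ξ => b ξ i))
    (hf : QuasiconvexOn ℝ Set.univ (fun p : (Fin n → ℝ) × (Fin mM → ℝ) => f p.1 p.2))
    (hd : ∀ x, QuasiconvexOn ℝ Set.univ (d x)) {S : Set (Fin mM → ℝ)}
    {y' : (Fin mM → ℝ) → (Fin n → ℝ)} (h : RecFeasible X G b S x y') :
    ∃ y, RecFeasible X G b (convexHull ℝ S) x y ∧
      recObjectives f d (convexHull ℝ S) x y ≤ recObjectives f d S x y' := by
  obtain ⟨y, hy⟩ := exists_forall_mem_convexHull_image_prod (𝕜 := ℝ) y' S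
  have hgraph : (fun ζ => (y' ζ, ζ)) '' S ⊆ {p | ScenarioFeasible X G b p.1 p.2} := by
    rintro _ ⟨ζ, hζ, rfl⟩
    exact h.2 ζ hζ
  refine ⟨y, ⟨h.1, fun ζ hζ => ?_⟩, ?_, ?_⟩
  · exact convexHull_min hgraph (convex_setOf_scenarioFeasible hX hG hb) (hy ζ hζ)
  · exact biSup_convexHull_le_of_quasiconvexOn hf hy
  · exact biSup_convexHull_le_of_quasiconvexOn ((hd x).comp_linearMap (LinearMap.fst ℝ _ _)) hy

end RecoverableRobust

theorem stmt7_general (X : Set (Fin n → ℝ)) (hX : Convex ℝ X)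
    (G : (Fin n → ℝ) → Fin m → ℝ) (b : (Fin mM → ℝ) → Fin m → ℝ)
    (hG : ∀ i, ConvexOn ℝ Set.univ (fun x => G x i))
    (hb : ∀ i, ConcaveOn ℝ Set.univ (fun ξ => b ξ i))
    (f : (Fin n → ℝ) → (Fin mM → ℝ) → ℝ)
    (hf : QuasiconvexOn ℝ Set.univ (fun p : (Fin n → ℝ) × (Fin mM → ℝ) => f p.1 p.2))
    (d : (Fin n → ℝ) → (Fin n → ℝ) → ℝ)
    -- quasiconvexity of the recovery costs in the second argument:
    (hd_qc : ∀ x, QuasiconvexOn ℝ Set.univ (d x))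
    {N : ℕ} (ξ : Fin N → (Fin mM → ℝ)) :
    ∀ x ∈ X, (RecoverableRobust X f G b d (convexHull ℝ (Set.range ξ)) x ↔
      RecoverableRobust X f G b d (Set.range ξ) x) := fun x _ =>
  recoverableRobust_iff_of_subset (subset_convexHull ℝ _)
    (fun _ _ hy' => hy'.exists_convexHull hX hG hb hf hd_qc) x

theorem stmt7 (X : Set (Fin n → ℝ)) (hX : Convex ℝ X)
    (G : (Fin n → ℝ) → Fin m → ℝ) (b : (Fin mM → ℝ) → Fin m → ℝ)
    (hG : ∀ i, ConvexOn ℝ Set.univ (fun x => G x i))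
    (hb : ∀ i, ConcaveOn ℝ Set.univ (fun ξ => b ξ i))
    (f : (Fin n → ℝ) → (Fin mM → ℝ) → ℝ)
    (hf : QuasiconvexOn ℝ Set.univ (fun p : (Fin n → ℝ) × (Fin mM → ℝ) => f p.1 p.2))
    (d : (Fin n → ℝ) → (Fin n → ℝ) → ℝ)
    -- `d` is a metric on `ℝ^n`:
    (hd_self : ∀ x y, d x y = 0 ↔ x = y)
    (hd_symm : ∀ x y, d x y = d y x)
    (hd_triangle : ∀ x y z, d x z ≤ d x y + d y z)
    -- quasiconvexity of the recovery costs in the second argument: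
    (hd_qc : ∀ x, QuasiconvexOn ℝ Set.univ (d x))
    {N : ℕ} (ξ : Fin N → (Fin mM → ℝ)) :
    ∀ x ∈ X, (RecoverableRobust X f G b d (convexHull ℝ (Set.range ξ)) x ↔
      RecoverableRobust X f G b d (Set.range ξ) x) :=
  stmt7_general X hX G b hG hb f hf d hd_qc ξ
end
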